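/- Let S be a complete random normed module over L^0. For every sequence {x_n} in S and every countable measurable partition {A_n} of Ω, there exists a unique x ∈ S such that Ĩ_{A_n} x = Ĩ_{A_n} x_n for all n, where Ĩ_{A_n} denotes the equivalence class of the indicator function of A_n. (In particular, every complete random normed module has the countable concatenation property.) -/

import Mathlib

open MeasureTheory Filter
noncomputable section

variable {Ω : Type} [MeasurableSpace Ω] {μ : Measure Ω}

/-- `L⁰(𝓕)`: equivalence classes of random variables, as a commutative ring. -/
instance : NatCast (Ω →ₘ[μ] ℝ) := ⟨fun n => AEEqFun.const Ω (n : ℝ)⟩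
instance : IntCast (Ω →ₘ[μ] ℝ) := ⟨fun n => AEEqFun.const Ω (n : ℝ)⟩
instance : CommRing (Ω →ₘ[μ] ℝ) :=
  AEEqFun.toGerm_injective.commRing AEEqFun.toGerm AEEqFun.zero_toGerm AEEqFun.one_toGerm
    AEEqFun.add_toGerm AEEqFun.mul_toGerm AEEqFun.neg_toGerm AEEqFun.sub_toGerm
    (fun _ _ => AEEqFun.smul_toGerm _ _) (fun _ _ => AEEqFun.smul_toGerm _ _)
    AEEqFun.pow_toGerm (fun _ => rfl) (fun _ => rfl)

/-- `L^∞(𝓕)`: the subring of essentially bounded random variables. -/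
def Linf (μ : Measure Ω) : Subring (Ω →ₘ[μ] ℝ) where
  carrier := {ξ | ∃ c : ℝ, ∀ᵐ ω ∂μ, |ξ ω| ≤ c}
  zero_mem' := ⟨0, by filter_upwards [AEEqFun.coeFn_zero (β := ℝ) (μ := μ)] with ω h; simp [h]⟩
  one_mem' := ⟨1, by filter_upwards [AEEqFun.coeFn_one (β := ℝ) (μ := μ)] with ω h; simp [h]⟩
  add_mem' := by
    rintro a b ⟨c, hc⟩ ⟨d, hd⟩
    exact ⟨c + d, by
      filter_upwards [AEEqFun.coeFn_add a b, hc, hd] with ω h1 h2 h3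
      calc |(a + b) ω| = |a ω + b ω| := by rw [h1]; rfl
        _ ≤ |a ω| + |b ω| := abs_add_le _ _
        _ ≤ c + d := add_le_add h2 h3⟩
  mul_mem' := by
    rintro a b ⟨c, hc⟩ ⟨d, hd⟩
    exact ⟨|c| * |d|, by
      filter_upwards [AEEqFun.coeFn_mul a b, hc, hd] with ω h1 h2 h3
      calc |(a * b) ω| = |a ω * b ω| := by rw [h1]; rfl
        _ = |a ω| * |b ω| := abs_mul _ _
        _ ≤ |c| * |d| :=
            mul_le_mul (h2.trans (le_abs_self c)) (h3.trans (le_abs_self d))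
              (abs_nonneg _) (abs_nonneg _)⟩
  neg_mem' := by
    rintro a ⟨c, hc⟩
    exact ⟨c, by
      filter_upwards [AEEqFun.coeFn_neg a, hc] with ω h1 h2
      calc |(-a) ω| = |-(a ω)| := by rw [h1]; rfl
        _ = |a ω| := abs_neg _
        _ ≤ c := h2⟩

/-- the constant `c`, as an element of `L^∞`. -/
def LinfConst (μ : Measure Ω) (c : ℝ) : Linf μ :=
  ⟨AEEqFun.const Ω c, |c|, by
    filter_upwards [AEEqFun.coeFn_const (α := Ω) (μ := μ) c] with ω h
    simp [h, Function.const]⟩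

/-- the equivalence class `Ĩ_A` of the indicator function of a set `A`. -/
def indL0 (μ : Measure Ω) (A : Set Ω) (hA : MeasurableSet A) : Ω →ₘ[μ] ℝ :=
  AEEqFun.mk (A.indicator (1 : Ω → ℝ)) ((measurable_const.indicator hA).aestronglyMeasurable)

/-- a countable measurable partition of `Ω`. -/
structure MPartition (Ω : Type) [MeasurableSpace Ω] where
  A : ℕ → Set Ω
  meas : ∀ k, MeasurableSet (A k)
  disj : ∀ m k, m ≠ k → A m ∩ A k = ∅
  cover : (⋃ k, A k) = Set.univ

/-- `Ĩ_{A_k}` for a member of a countable measurable partition. -/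
def MPartition.ind (P : MPartition Ω) (μ : Measure Ω) (k : ℕ) : Ω →ₘ[μ] ℝ :=
  indL0 μ (P.A k) (P.meas k)

/-- `‖·‖` is an `L⁰`-norm making the `L⁰`-module `S` a random normed module. -/
structure IsRNNorm (μ : Measure Ω) {S : Type} [AddCommGroup S]
    [Module (Ω →ₘ[μ] ℝ) S] (n : S → Ω →ₘ[μ] ℝ) : Prop where
  nonneg : ∀ x, 0 ≤ n x
  eq_zero_iff : ∀ x, n x = 0 ↔ x = 0
  norm_smul : ∀ (ξ : Ω →ₘ[μ] ℝ) (x : S), n (ξ • x) = |ξ| * n x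
  norm_add_le : ∀ x y, n (x + y) ≤ n x + n y

/-- `‖·‖` is an `L^∞`-norm making the `L^∞`-module `E` an `L^∞`-normed module. -/
structure IsLinfNorm (μ : Measure Ω) {E : Type} [AddCommGroup E]
    [Module (Linf μ) E] (n : E → Ω →ₘ[μ] ℝ) : Prop where
  nonneg : ∀ x, 0 ≤ n x
  mem_Linf : ∀ x, n x ∈ Linf μ
  eq_zero_iff : ∀ x, n x = 0 ↔ x = 0
  norm_smul : ∀ (ξ : Linf μ) (x : E), n (ξ • x) = |(ξ : Ω →ₘ[μ] ℝ)| * n x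
  norm_add_le : ∀ x y, n (x + y) ≤ n x + n y

/-- the metric `d(x,y) = E[1 ∧ ‖x-y‖]` associated to an `L⁰`- (or `L^∞`-) norm. -/
def ndist {S : Type} [AddCommGroup S] (μ : Measure Ω) (n : S → Ω →ₘ[μ] ℝ) (x y : S) : ℝ :=
  ∫ ω, min 1 |n (x - y) ω| ∂μ

/-- the distance of convergence in probability on `L⁰`. -/
def dProb (μ : Measure Ω) (ξ η : Ω →ₘ[μ] ℝ) : ℝ := ∫ ω, min 1 |ξ ω - η ω| ∂μ

/-- Cauchy property of a sequence with respect to a distance function. -/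
def dCauchy {S : Type} (d : S → S → ℝ) (x : ℕ → S) : Prop :=
  ∀ ε > (0:ℝ), ∃ N : ℕ, ∀ m ≥ N, ∀ k ≥ N, d (x m) (x k) < ε

/-- convergence of a sequence with respect to a distance function. -/
def dTendsto {S : Type} (d : S → S → ℝ) (x : ℕ → S) (y : S) : Prop :=
  Tendsto (fun k => d (x k) y) atTop (nhds 0)

/-- completeness with respect to a distance function. -/
def dComplete {S : Type} (d : S → S → ℝ) : Prop :=
  ∀ x : ℕ → S, dCauchy d x → ∃ y, dTendsto d x y

/-- a bundled complete-or-not random normed module over `L⁰(𝓕)`. -/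
structure RNMod (Ω : Type) [MeasurableSpace Ω] (μ : Measure Ω) where
  carrier : Type
  acg : AddCommGroup carrier
  mod : @Module (Ω →ₘ[μ] ℝ) carrier _ acg.toAddCommMonoid
  rnorm : carrier → Ω →ₘ[μ] ℝ
  isRNNorm : IsRNNorm μ rnorm

attribute [instance] RNMod.acg RNMod.mod

/-- the metric of the `(ε,λ)`-topology of a random normed module. -/
def RNMod.dist (S : RNMod Ω μ) : S.carrier → S.carrier → ℝ := ndist μ S.rnorm

/-- completeness of a random normed module in the `(ε,λ)`-topology. -/
def RNMod.Complete (S : RNMod Ω μ) : Prop := dComplete S.dist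

/-- the essential supremum `‖ξ‖_∞` of (the absolute value of) a random variable. -/
def NinfV (μ : Measure Ω) (ξ : Ω →ₘ[μ] ℝ) : ℝ := essSup (fun ω => |ξ ω|) μ

/-- `T` is an `L^∞`-module homomorphism from `E` into (the `L^∞`-module underlying) `S`. -/
def IsLinfModHom (μ : Measure Ω) {E S : Type} [AddCommGroup E] [Module (Linf μ) E]
    [AddCommGroup S] [Module (Ω →ₘ[μ] ℝ) S] (T : E → S) : Prop :=
  (∀ x y, T (x + y) = T x + T y) ∧
  (∀ (ξ : Linf μ) (x : E), T (ξ • x) = ((ξ : Ω →ₘ[μ] ℝ)) • T x)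

/-- `S` together with `T` is an `L⁰`-extension of the `L^∞`-normed module `(E, n)`:
`S` is a complete random normed module, `T` is a norm-preserving `L^∞`-module
homomorphism with dense range. -/
def IsL0Extension (μ : Measure Ω) {E : Type} [AddCommGroup E] [Module (Linf μ) E]
    (n : E → Ω →ₘ[μ] ℝ) (S : RNMod Ω μ) (T : E → S.carrier) : Prop :=
  S.Complete ∧ IsLinfModHom μ T ∧ (∀ x, S.rnorm (T x) = n x) ∧
  (∀ y : S.carrier, ∀ ε > (0:ℝ), ∃ x : E, S.dist (T x) y < ε)

/-- the set of elements of an `L⁰`-normed module with essentially bounded norm. -/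
def LinfPart (μ : Measure Ω) {S : Type} (n : S → Ω →ₘ[μ] ℝ) : Set S := {x | n x ∈ Linf μ}

/-- convergence in probability of a sequence of random variables. -/
def TendstoInProb (μ : Measure Ω) (ξ : ℕ → Ω →ₘ[μ] ℝ) (l : Ω →ₘ[μ] ℝ) : Prop :=
  Tendsto (fun k => dProb μ (ξ k) l) atTop (nhds 0)

/-- the countable concatenation hull `H⁰_cc(E)` of a subset `E` of a random normed module. -/
def Hcc (S : RNMod Ω μ) (E : Set S.carrier) : Set S.carrier :=
  {z | ∃ (x : ℕ → S.carrier) (P : MPartition Ω),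
    (∀ k, x k ∈ E) ∧ ∀ k, P.ind μ k • z = P.ind μ k • x k}

/-- `L(E) = L⁰ * E`, the set of `L⁰`-multiples of elements of `E`. -/
def Lgen (S : RNMod Ω μ) (E : Set S.carrier) : Set S.carrier :=
  {z | ∃ (ξ : Ω →ₘ[μ] ℝ) (x : S.carrier), x ∈ E ∧ z = ξ • x}

/-- `f` is a continuous `L^∞`-module homomorphism from `(E, n)` to `L^∞`, i.e. a member of
the dual `L^∞`-normed module `E′`. -/
def IsLinfDual (μ : Measure Ω) {E : Type} [AddCommGroup E] [Module (Linf μ) E]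
    (n : E → Ω →ₘ[μ] ℝ) (f : E → Ω →ₘ[μ] ℝ) : Prop :=
  (∀ x, f x ∈ Linf μ) ∧ (∀ x y, f (x + y) = f x + f y) ∧
  (∀ (ξ : Linf μ) (x : E), f (ξ • x) = (ξ : Ω →ₘ[μ] ℝ) * f x) ∧
  (∀ ε > (0:ℝ), ∃ δ > (0:ℝ), ∀ x, NinfV μ (n x) < δ → NinfV μ (f x) < ε)

/-- `g` is a continuous `L⁰`-module homomorphism from `S` to `L⁰`, i.e. a member of the
random conjugate space `S^*`. -/
def IsRNDual (μ : Measure Ω) (S : RNMod Ω μ) (g : S.carrier → Ω →ₘ[μ] ℝ) : Prop :=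
  (∀ x y, g (x + y) = g x + g y) ∧ (∀ (ξ : Ω →ₘ[μ] ℝ) x, g (ξ • x) = ξ * g x) ∧
  (∀ ε > (0:ℝ), ∃ δ > (0:ℝ), ∀ x, ndist μ S.rnorm x 0 < δ → dProb μ (g x) 0 < ε)

/-- the set `{|f(x)| : ‖x‖ ≤ 1}` whose supremum in the lattice `L⁰` is the dual norm `‖f‖′`. -/
def dualBall {X : Type} (n : X → Ω →ₘ[μ] ℝ) (f : X → Ω →ₘ[μ] ℝ) : Set (Ω →ₘ[μ] ℝ) :=
  {t | ∃ x, n x ≤ 1 ∧ t = |f x|}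

open Topology

/-! The partial concatenations `y N = ∑_{j < N} Ĩ_{A_j} x_j` form a Cauchy sequence: for `N ≤ m, k`
the difference `y m - y k` lives on the tail `⋃_{j ≥ N} A_j`, so its distance is at most the measure
of that tail, which tends to `0`. Multiplication by `Ĩ_{A_k}` does not increase distances and
freezes `y N` at `Ĩ_{A_k} x_k` once `N > k`, so the limit is a concatenation. Uniqueness holds
because an element killed by every `Ĩ_{A_k}` has norm vanishing on every `A_k`. -/

section Indicator

variable {A B : Set Ω}

lemma coeFn_indL0 (hA : MeasurableSet A) : (indL0 μ A hA : Ω → ℝ) =ᵐ[μ] A.indicator 1 :=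
  AEEqFun.coeFn_mk _ _

lemma indL0_congr (h : A = B) (hA : MeasurableSet A) (hB : MeasurableSet B) :
    indL0 μ A hA = indL0 μ B hB := by
  subst h
  rfl

lemma indL0_mul (hA : MeasurableSet A) (hB : MeasurableSet B) :
    indL0 μ A hA * indL0 μ B hB = indL0 μ (A ∩ B) (hA.inter hB) := by
  apply AEEqFun.ext
  filter_upwards [AEEqFun.coeFn_mul (indL0 μ A hA) (indL0 μ B hB), coeFn_indL0 hA,
    coeFn_indL0 hB, coeFn_indL0 (hA.inter hB)] with ω h hAω hBω hABω
  rw [h, Pi.mul_apply, hAω, hBω, hABω, Set.inter_indicator_one, Pi.mul_apply]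

lemma indL0_empty : indL0 μ ∅ MeasurableSet.empty = 0 := by
  apply AEEqFun.ext
  filter_upwards [coeFn_indL0 (μ := μ) MeasurableSet.empty, AEEqFun.coeFn_zero (β := ℝ) (μ := μ)]
    with ω h h0
  rw [h, h0, Set.indicator_empty]
  rfl

lemma indL0_mul_of_subset (hA : MeasurableSet A) (hB : MeasurableSet B) (hAB : A ⊆ B) :
    indL0 μ B hB * indL0 μ A hA = indL0 μ A hA := by
  rw [indL0_mul]
  exact indL0_congr (Set.inter_eq_right.mpr hAB) _ _

lemma indL0_mul_of_disjoint (hA : MeasurableSet A) (hB : MeasurableSet B) (h : Disjoint A B) :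
    indL0 μ A hA * indL0 μ B hB = 0 := by
  rw [indL0_mul, indL0_congr h.inter_eq _ MeasurableSet.empty, indL0_empty]

end Indicator

namespace MPartition

variable (P : MPartition Ω)

lemma ind_mul_self (k : ℕ) : P.ind μ k * P.ind μ k = P.ind μ k :=
  indL0_mul_of_subset _ _ subset_rfl

lemma ind_mul_of_ne {m k : ℕ} (h : m ≠ k) : P.ind μ m * P.ind μ k = 0 :=
  indL0_mul_of_disjoint _ _ (Set.disjoint_iff_inter_eq_empty.mpr (P.disj m k h))

lemma exists_mem (ω : Ω) : ∃ k, ω ∈ P.A k :=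
  Set.mem_iUnion.mp (P.cover ▸ Set.mem_univ ω)

def tail (N : ℕ) : Set Ω := ⋃ j ≥ N, P.A j

lemma measurableSet_tail (N : ℕ) : MeasurableSet (P.tail N) :=
  MeasurableSet.biUnion (Set.to_countable _) fun j _ => P.meas j

lemma subset_tail {N j : ℕ} (h : N ≤ j) : P.A j ⊆ P.tail N :=
  Set.subset_biUnion_of_mem (u := P.A) h

lemma tendsto_measureReal_tail [IsFiniteMeasure μ] :
    Tendsto (fun N => μ.real (P.tail N)) atTop (𝓝 0) := by
  have h := tendsto_measure_biUnion_Ici_zero_of_pairwise_disjoint (μ := μ)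
    (fun j => (P.meas j).nullMeasurableSet)
    (fun m k h => Set.disjoint_iff_inter_eq_empty.mpr (P.disj m k h))
  have h' := (ENNReal.tendsto_toReal ENNReal.zero_ne_top).comp h
  rw [ENNReal.toReal_zero] at h'
  exact h'

end MPartition

section RandomNorm

lemma ndist_nonneg {S : Type} [AddCommGroup S] (n : S → Ω →ₘ[μ] ℝ) (a b : S) :
    0 ≤ ndist μ n a b :=
  integral_nonneg fun _ => le_min zero_le_one (abs_nonneg _)

variable {S : Type} [AddCommGroup S] [Module (Ω →ₘ[μ] ℝ) S] {n : S → Ω →ₘ[μ] ℝ}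

lemma IsRNNorm.map_zero (hn : IsRNNorm μ n) : n 0 = 0 := (hn.eq_zero_iff 0).mpr rfl

lemma IsRNNorm.coeFn_indL0_smul (hn : IsRNNorm μ n) {A : Set Ω} (hA : MeasurableSet A) (v : S) :
    ∀ᵐ ω ∂μ, n (indL0 μ A hA • v) ω = A.indicator (n v) ω := by
  filter_upwards [AEEqFun.coeFn_mul |indL0 μ A hA| (n v), AEEqFun.coeFn_abs (indL0 μ A hA),
    coeFn_indL0 (μ := μ) hA] with ω hmul habs hind
  rw [hn.norm_smul, hmul, Pi.mul_apply, habs, hind]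
  by_cases hω : ω ∈ A <;> simp [hω]

lemma IsRNNorm.eq_zero_of_ae_eq_zero (hn : IsRNNorm μ n) {v : S} (h : (n v : Ω → ℝ) =ᵐ[μ] 0) :
    v = 0 :=
  (hn.eq_zero_iff v).mp (AEEqFun.ext (h.trans AEEqFun.coeFn_zero.symm))

lemma integrable_min_one_abs [IsFiniteMeasure μ] (g : Ω →ₘ[μ] ℝ) :
    Integrable (fun ω => min 1 |g ω|) μ := by
  refine Integrable.mono' (integrable_const 1)
    ((continuous_const.min continuous_abs).comp_aestronglyMeasurable g.aestronglyMeasurable)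
    (ae_of_all μ fun ω => ?_)
  rw [Real.norm_eq_abs, abs_of_nonneg (le_min zero_le_one (abs_nonneg _))]
  exact min_le_left _ _

lemma eq_of_ndist_eq_zero [IsFiniteMeasure μ] (hn : IsRNNorm μ n) {a b : S}
    (h : ndist μ n a b = 0) : a = b := by
  have h0 := (integral_eq_zero_iff_of_nonneg (fun _ => le_min zero_le_one (abs_nonneg _))
    (integrable_min_one_abs (n (a - b)))).mp h
  refine sub_eq_zero.mp (hn.eq_zero_of_ae_eq_zero ?_)
  filter_upwards [h0] with ω hω
  by_contra hne
  exact (lt_min zero_lt_one (abs_pos.mpr hne)).ne' hω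

lemma ndist_indL0_smul_le [IsFiniteMeasure μ] (hn : IsRNNorm μ n) {A : Set Ω}
    (hA : MeasurableSet A) (a b : S) :
    ndist μ n (indL0 μ A hA • a) (indL0 μ A hA • b) ≤ ndist μ n a b := by
  unfold ndist
  rw [← smul_sub]
  refine integral_mono_ae (integrable_min_one_abs _) (integrable_min_one_abs _) ?_
  filter_upwards [hn.coeFn_indL0_smul hA (a - b)] with ω hω
  rw [hω]
  by_cases hωA : ω ∈ A
  · rw [Set.indicator_of_mem hωA]
  · rw [Set.indicator_of_notMem hωA, abs_zero, min_eq_right zero_le_one]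
    exact le_min zero_le_one (abs_nonneg _)

lemma ndist_le_measureReal [IsFiniteMeasure μ] (hn : IsRNNorm μ n) {A : Set Ω}
    (hA : MeasurableSet A) {a b : S} (h : indL0 μ A hA • (a - b) = a - b) :
    ndist μ n a b ≤ μ.real A := by
  unfold ndist
  rw [← integral_indicator_one hA]
  refine integral_mono_ae (integrable_min_one_abs _)
    ((integrable_const (1 : ℝ)).indicator hA) ?_
  filter_upwards [hn.coeFn_indL0_smul hA (a - b)] with ω hω
  rw [← h, hω]
  by_cases hωA : ω ∈ A <;> simp [hωA]

lemma MPartition.eq_zero_of_forall_ind_smul_eq_zero (hn : IsRNNorm μ n) (P : MPartition Ω)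
    {v : S} (h : ∀ k, P.ind μ k • v = 0) : v = 0 := by
  refine hn.eq_zero_of_ae_eq_zero ?_
  filter_upwards [ae_all_iff.mpr fun k => hn.coeFn_indL0_smul (P.meas k) v,
    AEEqFun.coeFn_zero (β := ℝ) (μ := μ)] with ω hω h0
  obtain ⟨k, hk⟩ := P.exists_mem ω
  have hk' : n (P.ind μ k • v) ω = (P.A k).indicator (n v) ω := hω k
  rwa [h k, hn.map_zero, h0, Set.indicator_of_mem hk, eq_comm] at hk'

end RandomNorm

namespace MPartition

variable {S : Type} [AddCommGroup S] [Module (Ω →ₘ[μ] ℝ) S] (P : MPartition Ω) (x : ℕ → S)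

variable (μ) in
def concatSum (N : ℕ) : S := ∑ j ∈ Finset.range N, P.ind μ j • x j

lemma ind_smul_concatSum {k N : ℕ} (hkN : k < N) :
    P.ind μ k • P.concatSum μ x N = P.ind μ k • x k := by
  rw [concatSum, Finset.smul_sum, Finset.sum_eq_single_of_mem k (Finset.mem_range.mpr hkN)]
  · rw [smul_smul, ind_mul_self]
  · intro j _ hjk
    rw [smul_smul, ind_mul_of_ne P (Ne.symm hjk), zero_smul]

lemma indL0_tail_smul_concatSum_sub {N m : ℕ} (hNm : N ≤ m) :
    indL0 μ (P.tail N) (P.measurableSet_tail N) • (P.concatSum μ x m - P.concatSum μ x N)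
      = P.concatSum μ x m - P.concatSum μ x N := by
  rw [concatSum, concatSum, ← Finset.sum_Ico_eq_sub _ hNm, Finset.smul_sum]
  refine Finset.sum_congr rfl fun j hj => ?_
  rw [smul_smul, ind, indL0_mul_of_subset _ _ (P.subset_tail (Finset.mem_Ico.mp hj).1)]

variable {n : S → Ω →ₘ[μ] ℝ}

lemma dCauchy_concatSum [IsFiniteMeasure μ] (hn : IsRNNorm μ n) :
    dCauchy (ndist μ n) (P.concatSum μ x) := by
  intro ε hε
  obtain ⟨N, hN⟩ :=
    eventually_atTop.mp ((P.tendsto_measureReal_tail (μ := μ)).eventually_lt_const hε)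
  refine ⟨N, fun m hm k hk => (ndist_le_measureReal hn (P.measurableSet_tail N) ?_).trans_lt
    (hN N le_rfl)⟩
  have hsub : P.concatSum μ x m - P.concatSum μ x k
      = (P.concatSum μ x m - P.concatSum μ x N) - (P.concatSum μ x k - P.concatSum μ x N) := by
    abel
  rw [hsub, smul_sub, P.indL0_tail_smul_concatSum_sub x hm,
    P.indL0_tail_smul_concatSum_sub x hk]

lemma ind_smul_eq_of_dTendsto_concatSum [IsFiniteMeasure μ] (hn : IsRNNorm μ n) {z : S}
    (hz : dTendsto (ndist μ n) (P.concatSum μ x) z) (k : ℕ) :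
    P.ind μ k • z = P.ind μ k • x k := by
  have hle : ∀ N, k < N → ndist μ n (P.ind μ k • x k) (P.ind μ k • z)
      ≤ ndist μ n (P.concatSum μ x N) z := fun N hkN => by
    rw [← P.ind_smul_concatSum x hkN]
    exact ndist_indL0_smul_le hn (P.meas k) _ _
  have h0 : ndist μ n (P.ind μ k • x k) (P.ind μ k • z) ≤ 0 :=
    ge_of_tendsto hz (eventually_atTop.mpr ⟨k + 1, fun N hN => hle N hN⟩)
  exact (eq_of_ndist_eq_zero hn (h0.antisymm (ndist_nonneg _ _ _))).symm

end MPartition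

/-- in a complete random normed module, for every sequence `{x_n}` and
every countable measurable partition `{A_n}` of `Ω` there exists a unique `x` with
`Ĩ_{A_n} x = Ĩ_{A_n} x_n` for all `n` (the countable concatenation property). -/
theorem complete_RNMod_countable_concatenation
    {Ω : Type} [MeasurableSpace Ω] (μ : Measure Ω) [IsProbabilityMeasure μ]
    (S : RNMod Ω μ) (hS : S.Complete)
    (x : ℕ → S.carrier) (P : MPartition Ω) :
    ∃! z : S.carrier, ∀ k, P.ind μ k • z = P.ind μ k • x k := by
  obtain ⟨z, hz⟩ := hS _ (P.dCauchy_concatSum x S.isRNNorm)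
  have hconcat := P.ind_smul_eq_of_dTendsto_concatSum x S.isRNNorm hz
  refine ⟨z, hconcat, fun w hw => sub_eq_zero.mp ?_⟩
  refine P.eq_zero_of_forall_ind_smul_eq_zero S.isRNNorm fun k => ?_
  rw [smul_sub, hw k, hconcat k, sub_self]
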